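/- arXiv:0911.4540 — 2 statements merged into one kernel-verified Lean document; each statement's English description precedes it below -/
import Mathlib

section
/- For every real x > 0, one has 1/2 + sin(2x)/(4x) − sin²x/x² ≤ 5/8. -/
/-!
On `(0, π]` we have `x cos x ≤ sin x`, hence `sin 2x / (4x) = sin x · x cos x / (2x²) ≤ sin² x / x²`
and the expression is at most `1/2`. For `x > π` the middle term is at most `1/(4x) < 1/12` and the
last term is nonpositive.
-/

open Real

namespace Real

lemma mul_cos_le_sin {x : ℝ} (hx₀ : 0 ≤ x) (hxπ : x ≤ π) : x * cos x ≤ sin x := by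
  rcases lt_or_ge x (π / 2) with hx | hx
  · have hcos : 0 < cos x := cos_pos_of_mem_Ioo ⟨by linarith [pi_pos], hx⟩
    calc x * cos x ≤ tan x * cos x := mul_le_mul_of_nonneg_right (le_tan hx₀ hx) hcos.le
      _ = sin x := tan_mul_cos hcos.ne'
  · have hcos : cos x ≤ 0 := cos_nonpos_of_pi_div_two_le_of_le hx (by linarith [pi_pos])
    exact (mul_nonpos_of_nonneg_of_nonpos hx₀ hcos).trans (sin_nonneg_of_nonneg_of_le_pi hx₀ hxπ)

lemma sin_two_mul_div_le_sin_sq_div_sq {x : ℝ} (hx : 0 < x) (hxπ : x ≤ π) :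
    sin (2 * x) / (4 * x) ≤ sin x ^ 2 / x ^ 2 :=
  calc sin (2 * x) / (4 * x) = sin x * (x * cos x) / (2 * x ^ 2) := by
        rw [sin_two_mul]; field_simp; ring
    _ ≤ sin x * sin x / (2 * x ^ 2) := by
        gcongr
        · exact sin_nonneg_of_nonneg_of_le_pi hx.le hxπ
        · exact mul_cos_le_sin hx.le hxπ
    _ = sin x ^ 2 / x ^ 2 / 2 := by ring
    _ ≤ sin x ^ 2 / x ^ 2 := half_le_self (by positivity)

lemma sin_two_mul_div_le_of_pi_lt {x : ℝ} (hx : π < x) : sin (2 * x) / (4 * x) ≤ 1 / 8 := by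
  have hx₃ : 3 < x := pi_gt_three.trans hx
  calc sin (2 * x) / (4 * x) ≤ 1 / (4 * x) := by
        gcongr
        exact sin_le_one _
    _ ≤ 1 / (4 * 3) := by gcongr
    _ ≤ 1 / 8 := by norm_num

end Real

/-- For every real `x > 0`, one has `1/2 + sin(2x)/(4x) − sin²x/x² ≤ 5/8`. -/
theorem stmt_6 (x : ℝ) (hx : 0 < x) :
    1 / 2 + Real.sin (2 * x) / (4 * x) - Real.sin x ^ 2 / x ^ 2 ≤ 5 / 8 := by
  rcases le_or_gt x π with hxπ | hπx
  · linarith [sin_two_mul_div_le_sin_sq_div_sq hx hxπ]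
  · have hsq : 0 ≤ sin x ^ 2 / x ^ 2 := by positivity
    linarith [sin_two_mul_div_le_of_pi_lt hπx]
end

section
/- Let H be a complex Hilbert space (inner product conjugate-linear in the first argument) and G : H → H a bounded linear operator such that Im⟨G x, x⟩ ≥ 0 for all x ∈ H. Then for every χ ∈ ℂ with Im χ < 0 and every x ∈ H, ‖(I − χG)x‖ ≥ (−Im χ/|χ|)·‖x‖. In particular I − χG is injective and has closed range. -/
/-!
Since `⟪·, ·⟫` is conjugate-linear in its first argument, `χ ⟪x - χ G x, x⟫` has imaginary part
`Im χ ‖x‖² - |χ|² Im⟪G x, x⟫ ≤ Im χ ‖x‖²`, so `-Im χ ‖x‖² ≤ |χ| ‖(I - χ G) x‖ ‖x‖` by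
Cauchy–Schwarz. A lower bound `c ‖x‖ ≤ ‖B x‖` with `c > 0` makes `B` antilipschitz, hence
injective with closed range on a complete space.
-/

theorem mul_norm_le_norm_apply_of_mul_sq_le_norm_inner {𝕜 E : Type*} [RCLike 𝕜]
    [SeminormedAddCommGroup E] [InnerProductSpace 𝕜 E] (B : E → E) {c : ℝ}
    (h : ∀ x, c * ‖x‖ ^ 2 ≤ ‖(inner 𝕜 (B x) x : 𝕜)‖) (x : E) : c * ‖x‖ ≤ ‖B x‖ := by
  rcases (norm_nonneg x).eq_or_lt with hx | hx
  · simp [← hx]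
  · refine le_of_mul_le_mul_right ?_ hx
    calc c * ‖x‖ * ‖x‖ = c * ‖x‖ ^ 2 := by ring
      _ ≤ ‖(inner 𝕜 (B x) x : 𝕜)‖ := h x
      _ ≤ ‖B x‖ * ‖x‖ := norm_inner_le_norm _ _

section

variable {H : Type*} [SeminormedAddCommGroup H] [InnerProductSpace ℂ H] (G : H →L[ℂ] H)

theorem im_mul_inner_id_sub_smul_apply (χ : ℂ) (x : H) :
    (χ * inner ℂ ((ContinuousLinearMap.id ℂ H - χ • G) x) x).im
      = χ.im * ‖x‖ ^ 2 - ‖χ‖ ^ 2 * (inner ℂ (G x) x).im := by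
  have hχ : χ * starRingEnd ℂ χ = ((‖χ‖ ^ 2 : ℝ) : ℂ) := by
    rw [Complex.mul_conj, Complex.normSq_eq_norm_sq]
  have hx : inner ℂ x x = ((‖x‖ ^ 2 : ℝ) : ℂ) := by
    rw [inner_self_eq_norm_sq_to_K, Complex.ofReal_pow]; rfl
  have expand : χ * inner ℂ ((ContinuousLinearMap.id ℂ H - χ • G) x) x
      = χ * inner ℂ x x - χ * starRingEnd ℂ χ * inner ℂ (G x) x := by
    rw [sub_apply, ContinuousLinearMap.id_apply, smul_apply,
      inner_sub_left, inner_smul_left]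
    ring
  rw [expand, hχ, hx, Complex.sub_im, Complex.im_ofReal_mul, Complex.mul_im, Complex.ofReal_re,
    Complex.ofReal_im]
  ring

theorem mul_norm_le_norm_id_sub_smul_apply (hG : ∀ x : H, 0 ≤ (inner ℂ (G x) x : ℂ).im)
    {χ : ℂ} (hχ : χ.im < 0) (x : H) :
    (-χ.im / ‖χ‖) * ‖x‖ ≤ ‖(ContinuousLinearMap.id ℂ H - χ • G) x‖ := by
  have hχ0 : 0 < ‖χ‖ := norm_pos_iff.mpr fun h ↦ by simp [h] at hχ
  refine mul_norm_le_norm_apply_of_mul_sq_le_norm_inner (𝕜 := ℂ) _ (fun y ↦ ?_) x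
  set z := χ * inner ℂ ((ContinuousLinearMap.id ℂ H - χ • G) y) y
  have him : -χ.im * ‖y‖ ^ 2 ≤ -z.im := by
    have := im_mul_inner_id_sub_smul_apply G χ y
    nlinarith [hG y, sq_nonneg ‖χ‖]
  have hz : -z.im ≤ ‖χ‖ * ‖inner ℂ ((ContinuousLinearMap.id ℂ H - χ • G) y) y‖ :=
    (neg_le_abs _).trans ((Complex.abs_im_le_norm z).trans (norm_mul _ _).le)
  rw [div_mul_eq_mul_div, div_le_iff₀' hχ0]
  linarith

end

/-- Coercivity from the generalized optical theorem: if `G` is a bounded operator on a complex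
Hilbert space with `Im⟨Gx, x⟩ ≥ 0` for all `x`, and `Im χ < 0`, then
`‖(I − χG)x‖ ≥ (−Im χ/|χ|)·‖x‖`; in particular `I − χG` is injective with closed range. -/
theorem stmt_11 {H : Type*} [NormedAddCommGroup H] [InnerProductSpace ℂ H] [CompleteSpace H]
    (G : H →L[ℂ] H) (hG : ∀ x : H, 0 ≤ (inner ℂ (G x) x : ℂ).im)
    (χ : ℂ) (hχ : χ.im < 0) :
    (∀ x : H, (-χ.im / ‖χ‖) * ‖x‖ ≤ ‖(ContinuousLinearMap.id ℂ H - χ • G) x‖) ∧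
    Function.Injective ⇑(ContinuousLinearMap.id ℂ H - χ • G) ∧
    IsClosed (Set.range ⇑(ContinuousLinearMap.id ℂ H - χ • G)) := by
  have bound := mul_norm_le_norm_id_sub_smul_apply G hG hχ
  have hc : 0 < -χ.im / ‖χ‖ :=
    div_pos (neg_pos.mpr hχ) (norm_pos_iff.mpr fun h ↦ by simp [h] at hχ)
  obtain ⟨K, hK⟩ := antilipschitzWith_iff_exists_mul_le_norm.mpr ⟨_, hc, bound⟩
  exact ⟨bound, hK.injective, hK.isClosed_range (ContinuousLinearMap.uniformContinuous _)⟩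
end
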